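/- arXiv:2201.12932 — 4 statements merged into one kernel-verified Lean document; each statement's English description precedes it below -/
import Mathlib

section
/- Let n ≥ 0, let a < b be reals, and let γ : [a,b] → ℝ^{n+1} be a curve with totally positive torsion. Then for all points a < x₁ < x₂ < … < x_{n+1} < b one has det(γ′(x₁), γ′(x₂), …, γ′(x_{n+1})) > 0, where the determinant is that of the (n+1)×(n+1) matrix whose columns are the listed derivative vectors. -/
/-!
The components `u i` of `γ'` form an extended complete Chebyshev system on `(a, b)`: all leading
Wronskians `W(u 0, …, u (k - 1))` are positive. Such a system has positive collocation
determinants `det (u i (x j))` at increasing points, by induction on its size. First `u 0 > 0`;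
factoring `u 0 (x j)` out of the columns and subtracting consecutive columns turns the
determinant into `det (∫ in x j..x (j + 1), v i)` with `v i = (u (i + 1) / u 0)'`. By the Leibniz
rule the Wronskians of `v` are those of `u` divided by powers of `u 0`, so `v` is again such a
system, and the determinant of integrals is the integral, over a box of increasing tuples `t`, of
`det (v i (t j))`, which is positive by induction.
-/

noncomputable section

open Set

/-- A curve `γ : [a,b] → ℝ^d` has *totally positive torsion* if it is continuous on `[a,b]`,
`d`-times continuously differentiable on `(a,b)`, and for every `t ∈ (a,b)` all `d` leading
principal minors of the `d × d` matrix whose columns are `γ'(t), γ''(t), …, γ^{(d)}(t)`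
are positive. -/
def HasTotallyPositiveTorsion (d : ℕ) (a b : ℝ) (γ : ℝ → Fin d → ℝ) : Prop :=
  ContinuousOn γ (Set.Icc a b) ∧
  ContDiffOn ℝ d γ (Set.Ioo a b) ∧
  ∀ t ∈ Set.Ioo a b, ∀ (k : ℕ) (hk : k ≤ d), 1 ≤ k →
    0 < (Matrix.of (fun i j : Fin k =>
      iteratedDerivWithin (j.1 + 1) γ (Set.Ioo a b) t (Fin.castLE hk i))).det

open MeasureTheory

theorem Matrix.det_eq_det_submatrix_succ_of_row_zero {R : Type*} [CommRing R] {k : ℕ}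
    (A : Matrix (Fin (k + 1)) (Fin (k + 1)) R) (h₀ : A 0 0 = 1)
    (h : ∀ j : Fin k, A 0 j.succ = 0) :
    A.det = (A.submatrix Fin.succ Fin.succ).det := by
  simp [Matrix.det_succ_row_zero A, Fin.sum_univ_succ, h₀, h]

theorem Matrix.det_cons_one_eq_det_sub {R α : Type*} [CommRing R] {m : ℕ} (g : Fin m → α → R)
    (x : Fin (m + 1) → α) :
    (Matrix.of fun i j => (Fin.cons 1 g : Fin (m + 1) → α → R) i (x j)).det =
      (Matrix.of fun i j : Fin m => g i (x j.succ) - g i (x j.castSucc)).det := by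
  set A : Matrix (Fin (m + 1)) (Fin (m + 1)) R :=
    Matrix.of fun i j => (Fin.cons 1 g : Fin (m + 1) → α → R) i (x j)
  rw [Matrix.det_eq_of_forall_col_eq_smul_add_pred (B := Matrix.of fun i j =>
      Fin.cases (A i 0) (fun j => A i j.succ - A i j.castSucc) j) 1 (by simp) (by simp),
    Matrix.det_eq_det_submatrix_succ_of_row_zero _ (by simp [A]) (by simp [A])]
  rfl

section Wronskian

variable {𝕜 : Type*} [NontriviallyNormedField 𝕜]

def wronskianMatrix {k : ℕ} (s : Set 𝕜) (u : Fin k → 𝕜 → 𝕜) (t : 𝕜) :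
    Matrix (Fin k) (Fin k) 𝕜 :=
  Matrix.of fun i j => iteratedDerivWithin j (u i) s t

theorem wronskianMatrix_congr {k : ℕ} {s : Set 𝕜} {u w : Fin k → 𝕜 → 𝕜}
    (h : ∀ i, EqOn (u i) (w i) s) {t : 𝕜} (ht : t ∈ s) :
    wronskianMatrix s u t = wronskianMatrix s w t := by
  ext i j
  exact iteratedDerivWithin_congr (h i) ht

theorem det_wronskianMatrix_cons_one {k : ℕ} (s : Set 𝕜) (g : Fin k → 𝕜 → 𝕜) (t : 𝕜) :
    (wronskianMatrix s (Fin.cons 1 g) t).det =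
      (wronskianMatrix s (fun i => derivWithin (g i) s) t).det := by
  rw [Matrix.det_eq_det_submatrix_succ_of_row_zero]
  · congr 1
    ext i j
    simp [wronskianMatrix, iteratedDerivWithin_succ']
  · simp [wronskianMatrix]
  · intro j
    simp [wronskianMatrix, Pi.one_def, iteratedDerivWithin_const]

/-- The Leibniz rule writes the Wronskian matrix of `f i * h` as that of `f` times the upper
triangular matrix of entries `(j.choose r) * h^{(j - r)}`. -/
theorem det_wronskianMatrix_mul_right {k : ℕ} {s : Set 𝕜} (hs : UniqueDiffOn 𝕜 s) {t : 𝕜}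
    (ht : t ∈ s) {f : Fin k → 𝕜 → 𝕜} {h : 𝕜 → 𝕜}
    (hf : ∀ i, ContDiffWithinAt 𝕜 (k - 1 : ℕ) (f i) s t)
    (hh : ContDiffWithinAt 𝕜 (k - 1 : ℕ) h s t) :
    (wronskianMatrix s (fun i => f i * h) t).det = h t ^ k * (wronskianMatrix s f t).det := by
  set T : Matrix (Fin k) (Fin k) 𝕜 :=
    Matrix.of fun r j => (j.1.choose r : 𝕜) * iteratedDerivWithin (j - r) h s t
  have hT : T.IsUpperTriangular := fun j r hjr => by
    simp [T, Nat.choose_eq_zero_of_lt (show (r : ℕ) < j from hjr)]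
  have hleibniz : wronskianMatrix s (fun i => f i * h) t = wronskianMatrix s f t * T := by
    ext i j
    have hj : (j : ℕ) ≤ k - 1 := by omega
    simp only [wronskianMatrix, T, Matrix.mul_apply, Matrix.of_apply]
    rw [iteratedDerivWithin_mul ht hs ((hf i).of_le (mod_cast hj)) (hh.of_le (mod_cast hj)),
      Fin.sum_univ_eq_sum_range (fun r => iteratedDerivWithin r (f i) s t *
        ((j.1.choose r : 𝕜) * iteratedDerivWithin (j - r) h s t))]
    refine (Finset.sum_congr rfl fun r _ => by ring).trans
      (Finset.sum_subset (Finset.range_subset_range.2 (by omega)) (fun r _ hr => ?_))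
    simp [Nat.choose_eq_zero_of_lt (show (j : ℕ) < r by simpa using hr)]
  rw [hleibniz, Matrix.det_mul, Matrix.det_of_isUpperTriangular hT, mul_comm]
  simp [T]

end Wronskian

theorem iteratedDerivWithin_apply {𝕜 ι F : Type*} [NontriviallyNormedField 𝕜] [Fintype ι]
    [NormedAddCommGroup F] [NormedSpace 𝕜 F] {n : ℕ} {f : 𝕜 → ι → F} {s : Set 𝕜} {t : 𝕜}
    (hf : ContDiffWithinAt 𝕜 n f s t) (hs : UniqueDiffOn 𝕜 s) (ht : t ∈ s) (i : ι) :
    iteratedDerivWithin n f s t i = iteratedDerivWithin n (fun y => f y i) s t := by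
  simp only [iteratedDerivWithin]
  rw [show (fun y => f y i) = ContinuousLinearMap.proj (R := 𝕜) (φ := fun _ : ι => F) i ∘ f
      from rfl, ContinuousLinearMap.iteratedFDerivWithin_comp_left _ hf hs ht le_rfl]
  rfl

theorem integral_derivWithin_eq_sub {s : Set ℝ} (hs : IsOpen s) (hs' : s.OrdConnected)
    {g : ℝ → ℝ} (hg : ContDiffOn ℝ 1 g s) {a b : ℝ} (ha : a ∈ s) (hb : b ∈ s) :
    ∫ y in a..b, derivWithin g s y = g b - g a := by
  have hab : uIcc a b ⊆ s := hs'.uIcc_subset ha hb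
  refine intervalIntegral.integral_eq_sub_of_hasDerivAt (fun y hy => ?_) ?_
  · rw [derivWithin_of_isOpen hs (hab hy)]
    exact ((hg.differentiableOn one_ne_zero).differentiableAt (hs.mem_nhds (hab hy))).hasDerivAt
  · exact ((hg.continuousOn_derivWithin hs.uniqueDiffOn le_rfl).mono hab).intervalIntegrable

section CompositionFormula

variable {ι α : Type*} [Fintype ι] [DecidableEq ι] [MeasurableSpace α] {μ : ι → Measure α}
  [∀ j, SigmaFinite (μ j)] {w : ι → α → ℝ}

theorem integrable_det_pi (hw : ∀ i j, Integrable (w i) (μ j)) :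
    Integrable (fun t : ι → α => (Matrix.of fun i j => w i (t j)).det) (Measure.pi μ) := by
  simp only [Matrix.det_apply', Matrix.of_apply]
  exact integrable_finsetSum _ fun σ _ =>
    (Integrable.fintype_prod fun j => hw (σ j) j).const_mul _

theorem integral_det_pi (hw : ∀ i j, Integrable (w i) (μ j)) :
    ∫ t, (Matrix.of fun i j => w i (t j)).det ∂Measure.pi μ =
      (Matrix.of fun i j => ∫ y, w i y ∂μ j).det := by
  simp only [Matrix.det_apply', Matrix.of_apply]
  rw [integral_finsetSum _ fun σ _ => (Integrable.fintype_prod fun j => hw (σ j) j).const_mul _]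
  refine Finset.sum_congr rfl fun σ _ => ?_
  rw [integral_const_mul, integral_fintype_prod_eq_prod (fun j => w (σ j))]

end CompositionFormula

/-- The determinant of integrals over consecutive intervals `(x j.castSucc, x j.succ]` is the
integral of `det (w i (t j))` over their product, and every point `t` of that box is strictly
increasing. -/
theorem det_intervalIntegral_pos {m : ℕ} {s : Set ℝ} (hs : s.OrdConnected) {w : Fin m → ℝ → ℝ}
    (hw : ∀ i, ContinuousOn (w i) s)
    (hpos : ∀ t : Fin m → ℝ, StrictMono t → (∀ j, t j ∈ s) →
      0 < (Matrix.of fun i j => w i (t j)).det)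
    {x : Fin (m + 1) → ℝ} (hx : StrictMono x) (hxs : ∀ j, x j ∈ s) :
    0 < (Matrix.of fun i j : Fin m => ∫ y in x j.castSucc..x j.succ, w i y).det := by
  set I : Fin m → Set ℝ := fun j => Ioc (x j.castSucc) (x j.succ)
  have hlt : ∀ j : Fin m, x j.castSucc < x j.succ := fun j => hx j.castSucc_lt_succ
  have hIs : ∀ j, I j ⊆ s := fun j => Ioc_subset_Icc_self.trans (hs.out (hxs _) (hxs _))
  have hint : ∀ i j, Integrable (w i) (volume.restrict (I j)) := fun i j =>
    ((hw i).mono (hs.out (hxs _) (hxs _))).integrableOn_Icc.mono_set Ioc_subset_Icc_self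
  have hbox : volume.restrict (univ.pi I) = Measure.pi fun j => volume.restrict (I j) := by
    rw [volume_pi, Measure.restrict_pi_pi]
  have hF : ∀ t ∈ univ.pi I, 0 < (Matrix.of fun i j => w i (t j)).det := by
    refine fun t ht => hpos t (fun i j hij => ?_) fun j => hIs j (ht j trivial)
    calc t i ≤ x i.succ := (ht i trivial).2
      _ ≤ x j.castSucc := hx.monotone (Fin.succ_le_castSucc_iff.2 hij)
      _ < t j := (ht j trivial).1
  simp_rw [intervalIntegral.integral_of_le (hlt _).le]
  rw [← integral_det_pi hint, ← hbox]
  refine (setIntegral_pos_iff_support_of_nonneg_ae ?_ ?_).2 ?_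
  · filter_upwards [ae_restrict_mem (MeasurableSet.univ_pi fun j => measurableSet_Ioc)]
      with t ht using (hF t ht).le
  · rw [IntegrableOn, hbox]
    exact integrable_det_pi hint
  · refine lt_of_lt_of_le ?_ (measure_mono fun t ht => ⟨(hF t ht).ne', ht⟩)
    simp [volume_pi_pi, I, Real.volume_Ioc, CanonicallyOrderedAdd.prod_pos, hlt]

/-- An extended complete Chebyshev system on `s`: all leading Wronskians are positive. -/
structure IsECTSystem {d : ℕ} (s : Set ℝ) (u : Fin d → ℝ → ℝ) : Prop where
  contDiffOn : ∀ i, ContDiffOn ℝ (d - 1 : ℕ) (u i) s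
  det_wronskianMatrix_pos : ∀ t ∈ s, ∀ k (hk : k ≤ d),
    0 < (wronskianMatrix s (fun i : Fin k => u (Fin.castLE hk i)) t).det

namespace IsECTSystem

variable {s : Set ℝ} {m : ℕ} {u : Fin (m + 1) → ℝ → ℝ}

theorem pos_zero (hu : IsECTSystem s u) {t : ℝ} (ht : t ∈ s) : 0 < u 0 t := by
  simpa [wronskianMatrix] using hu.det_wronskianMatrix_pos t ht 1 (by omega)

theorem contDiffOn_div_zero (hu : IsECTSystem s u) (i : Fin m) :
    ContDiffOn ℝ m (u i.succ / u 0) s := by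
  have h := (hu.contDiffOn i.succ).div (hu.contDiffOn 0) fun t ht => (hu.pos_zero ht).ne'
  simpa using h

theorem derivWithin_div_zero (hs : UniqueDiffOn ℝ s) (hu : IsECTSystem s u) :
    IsECTSystem s fun i : Fin m => derivWithin (u i.succ / u 0) s := by
  refine ⟨fun i => (hu.contDiffOn_div_zero i).derivWithin hs
    (by have := i.pos; exact_mod_cast (by omega : m - 1 + 1 ≤ m)),
    fun t ht k hk => ?_⟩
  set g : Fin k → ℝ → ℝ := fun i => u (Fin.castLE hk i).succ / u 0
  have hfac : ∀ i : Fin (k + 1),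
      EqOn (u (Fin.castLE (by omega) i)) ((Fin.cons 1 g : Fin (k + 1) → ℝ → ℝ) i * u 0) s := by
    refine Fin.cases (fun y _ => by simp) fun i y hy => ?_
    simp [g, div_mul_cancel₀ _ (hu.pos_zero hy).ne']
  have hg : ∀ i, ContDiffWithinAt ℝ (k + 1 - 1 : ℕ) ((Fin.cons 1 g : Fin (k + 1) → ℝ → ℝ) i) s t :=
    Fin.cases contDiffWithinAt_const fun i =>
      ((hu.contDiffOn_div_zero _).of_le (mod_cast (by omega : k + 1 - 1 ≤ m))).contDiffWithinAt ht
  have hW := hu.det_wronskianMatrix_pos t ht (k + 1) (by omega)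
  rw [wronskianMatrix_congr hfac ht, det_wronskianMatrix_mul_right hs ht hg
    (((hu.contDiffOn 0).of_le (mod_cast (by omega : k + 1 - 1 ≤ m + 1 - 1))).contDiffWithinAt ht),
    det_wronskianMatrix_cons_one] at hW
  exact pos_of_mul_pos_right hW (pow_pos (hu.pos_zero ht) _).le

end IsECTSystem

theorem IsECTSystem.det_pos {s : Set ℝ} (hs : IsOpen s) (hs' : s.OrdConnected) {d : ℕ}
    {u : Fin d → ℝ → ℝ} (hu : IsECTSystem s u) {x : Fin d → ℝ} (hx : StrictMono x)
    (hxs : ∀ j, x j ∈ s) : 0 < (Matrix.of fun i j => u i (x j)).det := by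
  induction d with
  | zero => simp
  | succ m ih =>
    set g : Fin m → ℝ → ℝ := fun i => u i.succ / u 0
    have hcol : (Matrix.of fun i j => u i (x j)).det = (∏ j, u 0 (x j)) *
        (Matrix.of fun i j => (Fin.cons 1 g : Fin (m + 1) → ℝ → ℝ) i (x j)).det := by
      rw [← Matrix.det_mul_row]
      congr 1
      ext i j
      refine Fin.cases ?_ (fun i => ?_) i
      · simp
      · simp [g, mul_div_cancel₀ _ (hu.pos_zero (hxs j)).ne']
    have hinc : ∀ i j : Fin m, g i (x j.succ) - g i (x j.castSucc) =
        ∫ y in x j.castSucc..x j.succ, derivWithin (g i) s y := fun i j =>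
      (integral_derivWithin_eq_sub hs hs'
        ((hu.contDiffOn_div_zero i).of_le (by have := i.pos; exact_mod_cast this))
        (hxs _) (hxs _)).symm
    have hv := hu.derivWithin_div_zero hs.uniqueDiffOn
    rw [hcol, Matrix.det_cons_one_eq_det_sub]
    simp_rw [hinc]
    exact mul_pos (Finset.prod_pos fun j _ => hu.pos_zero (hxs j))
      (det_intervalIntegral_pos hs' (fun i => (hv.contDiffOn i).continuousOn)
        (fun t ht hts => ih hv ht hts) hx hxs)

theorem HasTotallyPositiveTorsion.isECTSystem {d : ℕ} {a b : ℝ} {γ : ℝ → Fin d → ℝ}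
    (hγ : HasTotallyPositiveTorsion d a b γ) :
    IsECTSystem (Ioo a b) fun i t => derivWithin γ (Ioo a b) t i := by
  obtain ⟨-, hγd, hminors⟩ := hγ
  have hs := uniqueDiffOn_Ioo a b
  have hγ' : ∀ i : Fin d, ContDiffOn ℝ (d - 1 : ℕ) (derivWithin γ (Ioo a b)) (Ioo a b) :=
    fun i => hγd.derivWithin hs (by have := i.pos; exact_mod_cast (by omega : d - 1 + 1 ≤ d))
  refine ⟨fun i => contDiffOn_pi.1 (hγ' i) i, fun t ht k hk => ?_⟩
  rcases Nat.eq_zero_or_pos k with rfl | hk1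
  · simp
  convert hminors t ht k hk hk1 using 2
  ext i j
  rw [wronskianMatrix, Matrix.of_apply, Matrix.of_apply, iteratedDerivWithin_succ',
    iteratedDerivWithin_apply _ hs ht]
  exact ((hγ' (Fin.castLE hk i)).of_le (mod_cast (by omega : j.1 ≤ d - 1))).contDiffWithinAt ht

theorem stmt0_general (n : ℕ) (a b : ℝ) (γ : ℝ → Fin (n + 1) → ℝ)
    (hγ : HasTotallyPositiveTorsion (n + 1) a b γ)
    (x : Fin (n + 1) → ℝ) (hx : StrictMono x)
    (hmem : ∀ j, x j ∈ Set.Ioo a b) :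
    0 < (Matrix.of (fun i j : Fin (n + 1) =>
      derivWithin γ (Set.Ioo a b) (x j) i)).det :=
  hγ.isECTSystem.det_pos isOpen_Ioo ordConnected_Ioo hx hmem

theorem stmt0 (n : ℕ) (a b : ℝ) (hab : a < b) (γ : ℝ → Fin (n + 1) → ℝ)
    (hγ : HasTotallyPositiveTorsion (n + 1) a b γ)
    (x : Fin (n + 1) → ℝ) (hx : StrictMono x)
    (hmem : ∀ j, x j ∈ Set.Ioo a b) :
    0 < (Matrix.of (fun i j : Fin (n + 1) =>
      derivWithin γ (Set.Ioo a b) (x j) i)).det :=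
  stmt0_general n a b γ hγ x hx hmem

end
end

section
/- Let m ≥ 1, let a < b be reals, and let β : [a,b] → ℝ^m be a curve with totally positive torsion. Then for any points a ≤ z₁ < z₂ < … < z_m ≤ b and any r ∈ [a,b] with r ∉ {z₁, …, z_m}, the m vectors β(z₁) − β(r), …, β(z_m) − β(r) are linearly independent in ℝ^m. -/
noncomputable section

open Set

/-!
If a nonzero functional `c` annihilated all `β (zᵢ) - β r`, then `c ⬝ β` would take the same value
at the `m + 1` points `r, z₁, …, zₘ`, so by Rolle `c ⬝ β'` would have `m` zeros in `(a, b)`. But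
the leading minors of the torsion matrix are the Wronskians `W(β'₁, …, β'ₖ)`, and a combination of
functions `u₀, …, u_{n-1}` with positive leading Wronskians has fewer than `n` zeros unless it is
trivial: dividing by `u₀ > 0` and differentiating kills `u₀` and, by `W(u₀, …, uₖ) = u₀^(k+1)
W((u₁/u₀)', …, (uₖ/u₀)')`, leaves such a system of `n - 1` functions, while Rolle loses only one
zero.
-/

open Filter Topology

section Wronskian

variable {𝕜 : Type*} [NontriviallyNormedField 𝕜]

def wronskian {k : ℕ} (f : Fin k → 𝕜 → 𝕜) (t : 𝕜) : 𝕜 :=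
  (Matrix.of fun i j : Fin k => iteratedDeriv j (f i) t).det

theorem wronskian_congr {k : ℕ} {f g : Fin k → 𝕜 → 𝕜} {t : 𝕜} (h : ∀ i, f i =ᶠ[𝓝 t] g i) :
    wronskian f t = wronskian g t := by
  simp only [wronskian, (h _).iteratedDeriv_eq]

/-- By Leibniz's rule the Wronskian matrix of the `f i * g` is that of the `f i` times an upper
triangular matrix with diagonal `g t`. -/
theorem wronskian_mul {k : ℕ} {f : Fin k → 𝕜 → 𝕜} {g : 𝕜 → 𝕜} {t : 𝕜}
    (hf : ∀ i, ContDiffAt 𝕜 (k - 1 : ℕ) (f i) t) (hg : ContDiffAt 𝕜 (k - 1 : ℕ) g t) :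
    wronskian (fun i => f i * g) t = g t ^ k * wronskian f t := by
  let B : Matrix (Fin k) (Fin k) 𝕜 := Matrix.of fun l j =>
    ((j : ℕ).choose l : 𝕜) * iteratedDeriv (j - l) g t
  have hB : B.det = g t ^ k := by
    rw [Matrix.det_of_isUpperTriangular fun i j (hji : j < i) => by
      simp [B, Nat.choose_eq_zero_of_lt hji]]
    simp [B]
  have hleibniz : (Matrix.of fun i j : Fin k => iteratedDeriv j (f i * g) t) =
      (Matrix.of fun i j : Fin k => iteratedDeriv j (f i) t) * B := by
    ext i j
    have hj : (j : ℕ) ≤ k - 1 := by omega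
    rw [Matrix.of_apply, iteratedDeriv_mul ((hf i).of_le (by exact_mod_cast hj))
      (hg.of_le (by exact_mod_cast hj)), Matrix.mul_apply]
    simp only [Matrix.of_apply, B]
    rw [Fin.sum_univ_eq_sum_range
      (fun l : ℕ => iteratedDeriv l (f i) t * (((j : ℕ).choose l : 𝕜) * iteratedDeriv (j - l) g t))]
    rw [← Finset.sum_subset (Finset.range_subset_range.2 j.isLt) fun l _ hl => ?_]
    · exact Finset.sum_congr rfl fun l _ => by ring
    · rw [Nat.choose_eq_zero_of_lt (by simpa using hl)]
      simp
  rw [wronskian, hleibniz, Matrix.det_mul, hB, mul_comm, wronskian]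

theorem wronskian_of_eventuallyEq_one {k : ℕ} {f : Fin (k + 1) → 𝕜 → 𝕜} {t : 𝕜}
    (h0 : f 0 =ᶠ[𝓝 t] 1) :
    wronskian f t = wronskian (fun i : Fin k => deriv (f i.succ)) t := by
  have hrow : ∀ j : Fin (k + 1), iteratedDeriv j (f 0) t = if (j : ℕ) = 0 then 1 else 0 := by
    intro j
    rw [h0.iteratedDeriv_eq, Pi.one_def, iteratedDeriv_const]
  rw [wronskian, Matrix.det_succ_row_zero, Fin.sum_univ_succ]
  simp only [Matrix.of_apply, hrow]
  simp [wronskian, Matrix.submatrix, iteratedDeriv_succ']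

theorem wronskian_eq_pow_mul_wronskian_deriv_div {k : ℕ} {f : Fin (k + 1) → 𝕜 → 𝕜} {t : 𝕜}
    (hf : ∀ i, ContDiffAt 𝕜 k (f i) t) (h0 : f 0 t ≠ 0) :
    wronskian f t = f 0 t ^ (k + 1) * wronskian (fun i : Fin k => deriv (f i.succ / f 0)) t := by
  have hne : ∀ᶠ x in 𝓝 t, f 0 x ≠ 0 := (hf 0).continuousAt.eventually_ne h0
  have hdiv : ∀ i, ContDiffAt 𝕜 k (f i / f 0) t := fun i => (hf i).div (hf 0) h0
  calc wronskian f t = wronskian (fun i => f i / f 0 * f 0) t :=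
        wronskian_congr fun i => by
          filter_upwards [hne] with x hx using (div_mul_cancel₀ (f i x) hx).symm
    _ = f 0 t ^ (k + 1) * wronskian (fun i => f i / f 0) t :=
        wronskian_mul (by simpa using hdiv) (by simpa using hf 0)
    _ = _ := by
        rw [wronskian_of_eventuallyEq_one]
        filter_upwards [hne] with x hx using div_self hx

end Wronskian

theorem exists_strictMono_deriv_eq_zero {s : Set ℝ} (hs : s.OrdConnected) {F : ℝ → ℝ}
    (hF : ContinuousOn F s) {n : ℕ} {x : Fin (n + 1) → ℝ} (hx : StrictMono x)
    (hxs : ∀ j, x j ∈ s) {C : ℝ} (hFx : ∀ j, F (x j) = C) :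
    ∃ y : Fin n → ℝ, StrictMono y ∧ (∀ j, y j ∈ Ioo (x 0) (x (Fin.last n))) ∧
      ∀ j, deriv F (y j) = 0 := by
  have hrolle : ∀ j : Fin n, ∃ y ∈ Ioo (x j.castSucc) (x j.succ), deriv F y = 0 := fun j =>
    exists_deriv_eq_zero (hx j.castSucc_lt_succ)
      (hF.mono (hs.out (hxs _) (hxs _))) (by rw [hFx, hFx])
  choose y hy hyF using hrolle
  refine ⟨y, fun j j' hjj' => ?_, fun j => ⟨?_, ?_⟩, hyF⟩
  · calc y j < x j.succ := (hy j).2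
      _ ≤ x j'.castSucc := hx.monotone (Fin.succ_le_castSucc_iff.2 hjj')
      _ < y j' := (hy j').1
  · exact (hx.monotone (Fin.zero_le _)).trans_lt (hy j).1
  · exact (hy j).2.trans_le (hx.monotone (Fin.le_last _))

theorem deriv_sum_mul {ι : Type*} [Fintype ι] {c : ι → ℝ} {f : ι → ℝ → ℝ} {y : ℝ}
    (hf : ∀ i, DifferentiableAt ℝ (f i) y) :
    deriv (fun x => ∑ i, c i * f i x) y = ∑ i, c i * deriv (f i) y := by
  rw [deriv_fun_sum fun i _ => (hf i).const_mul (c i)]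
  exact Finset.sum_congr rfl fun i _ => deriv_const_mul _ (hf i)

open Matrix in
theorem Matrix.linearIndependent_rows_iff_mulVec_eq_zero {K n : Type*} [Field K] [Fintype n]
    [DecidableEq n] {A : Matrix n n K} :
    LinearIndependent K A.row ↔ ∀ c, A *ᵥ c = 0 → c = 0 := by
  rw [linearIndependent_rows_iff_isUnit, ← mulVec_injective_iff_isUnit, ← coe_mulVecLin,
    injective_iff_map_eq_zero]

theorem exists_strictMono_forall_mem_insert_range {α : Type*} [LinearOrder α] {m : ℕ}
    {z : Fin m → α} (hz : Function.Injective z) {r : α} (hr : r ∉ range z) :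
    ∃ p : Fin (m + 1) → α, StrictMono p ∧ ∀ j, p j ∈ insert r (range z) := by
  classical
  have hcard : (insert r (Finset.univ.image z)).card = m + 1 := by
    rw [Finset.card_insert_of_notMem (by simpa using hr), Finset.card_image_of_injective _ hz,
      Finset.card_fin]
  refine ⟨_, (Finset.orderEmbOfFin _ hcard).strictMono, fun j => ?_⟩
  have h := Finset.orderEmbOfFin_mem _ hcard j
  rw [Finset.mem_insert, Finset.mem_image] at h
  simpa [eq_comm] using h

theorem iteratedDerivWithin_pi_apply {ι : Type*} [Fintype ι] {γ : ℝ → ι → ℝ} {s : Set ℝ} {N : ℕ}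
    (hγ : ContDiffOn ℝ N γ s) (hs : UniqueDiffOn ℝ s) {t : ℝ} (ht : t ∈ s) {j : ℕ} (hj : j ≤ N)
    (i : ι) : iteratedDerivWithin j (fun x => γ x i) s t = iteratedDerivWithin j γ s t i := by
  have h := congrArg (· fun _ => (1 : ℝ))
    ((ContinuousLinearMap.proj (R := ℝ) (φ := fun _ : ι => ℝ) i).iteratedFDerivWithin_comp_left
      (hγ t ht) hs ht (i := j) (by exact_mod_cast hj))
  simpa [iteratedDerivWithin_eq_iteratedFDerivWithin, Function.comp_def] using h

/-- `u` is an extended complete Chebyshev (ECT) system on `s`. -/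
def HasPosLeadingWronskians {n : ℕ} (u : Fin n → ℝ → ℝ) (s : Set ℝ) : Prop :=
  ∀ t ∈ s, ∀ k (hk : k ≤ n), 0 < wronskian (fun i : Fin k => u (Fin.castLE hk i)) t

namespace HasPosLeadingWronskians

variable {n : ℕ} {s : Set ℝ}

theorem pos_zero {u : Fin (n + 1) → ℝ → ℝ} (hW : HasPosLeadingWronskians u s) {t : ℝ}
    (ht : t ∈ s) : 0 < u 0 t := by
  simpa [wronskian] using hW t ht 1 (by omega)

theorem deriv_succ_div_zero {u : Fin (n + 1) → ℝ → ℝ} (hs : IsOpen s)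
    (hu : ∀ i, ContDiffOn ℝ n (u i) s) (hW : HasPosLeadingWronskians u s) :
    HasPosLeadingWronskians (fun i : Fin n => deriv (u i.succ / u 0)) s := by
  intro t ht k hk
  have h := hW t ht (k + 1) (Nat.succ_le_succ hk)
  rw [wronskian_eq_pow_mul_wronskian_deriv_div
    (f := fun i => u (Fin.castLE (Nat.succ_le_succ hk) i))
    (fun i => ((hu _).contDiffAt (hs.mem_nhds ht)).of_le (by exact_mod_cast hk))
    (hW.pos_zero ht).ne'] at h
  exact pos_of_mul_pos_right h (pow_nonneg (hW.pos_zero ht).le _)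

theorem eq_zero_of_sum_mul_eq_zero {u : Fin n → ℝ → ℝ} (hs : IsOpen s) (hs' : s.OrdConnected)
    (hu : ∀ i, ContDiffOn ℝ (n - 1 : ℕ) (u i) s) (hW : HasPosLeadingWronskians u s)
    {c x : Fin n → ℝ} (hx : StrictMono x) (hxs : ∀ j, x j ∈ s)
    (hc : ∀ j, ∑ i, c i * u i (x j) = 0) : c = 0 := by
  induction n with
  | zero => exact Subsingleton.elim _ _
  | succ n ih =>
    have hu' : ∀ i, ContDiffOn ℝ n (u i) s := hu
    have hv : ∀ i, ContDiffOn ℝ n (u i / u 0) s := fun i =>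
      (hu' i).div (hu' 0) fun t ht => (hW.pos_zero ht).ne'
    obtain ⟨y, hy, hyx, hyg⟩ := exists_strictMono_deriv_eq_zero hs'
      (F := fun t => ∑ i, c i * (u i / u 0) t)
      (continuousOn_finsetSum _ fun i _ => continuousOn_const.mul (hv i).continuousOn) hx hxs
      (C := 0) fun j => by
        simp only [Pi.div_apply, mul_div_assoc', ← Finset.sum_div, hc, zero_div]
    have hys : ∀ j, y j ∈ s := fun j => hs'.out (hxs 0) (hxs _) (Ioo_subset_Icc_self (hyx j))
    have htail : (fun i : Fin n => c i.succ) = 0 := by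
      refine ih (fun i : Fin n => (hv i.succ).deriv_of_isOpen hs ?_) (hW.deriv_succ_div_zero hs hu')
        hy hys fun j => ?_
      · exact_mod_cast (show n - 1 + 1 ≤ n by have := i.pos; omega)
      have hdiff : ∀ i, DifferentiableAt ℝ (u i / u 0) (y j) := fun i =>
        ((hv i).contDiffAt (hs.mem_nhds (hys j))).differentiableAt
          (by exact_mod_cast j.pos.ne')
      have hone : deriv (u 0 / u 0) (y j) = 0 := by
        rw [Filter.EventuallyEq.deriv_eq (f := fun _ => (1 : ℝ)), deriv_const]
        filter_upwards [hs.mem_nhds (hys j)] with t ht using div_self (hW.pos_zero ht).ne'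
      have h := hyg j
      rwa [deriv_sum_mul hdiff, Fin.sum_univ_succ, hone, mul_zero, zero_add] at h
    have hhead : c 0 * u 0 (x 0) = 0 := by
      simpa [Fin.sum_univ_succ, funext_iff.1 htail] using hc 0
    ext i
    cases i using Fin.cases with
    | zero => exact (mul_eq_zero.1 hhead).resolve_right (hW.pos_zero (hxs 0)).ne'
    | succ i => exact funext_iff.1 htail i

end HasPosLeadingWronskians

theorem HasTotallyPositiveTorsion.hasPosLeadingWronskians_deriv {d : ℕ} {a b : ℝ}
    {γ : ℝ → Fin d → ℝ} (hγ : HasTotallyPositiveTorsion d a b γ) :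
    HasPosLeadingWronskians (fun i => deriv (fun x => γ x i)) (Ioo a b) := by
  intro t ht k hk
  rcases Nat.eq_zero_or_pos k with rfl | hk0
  · simp [wronskian]
  convert hγ.2.2 t ht k hk hk0 using 1
  rw [wronskian]
  congr 1
  ext i j
  rw [Matrix.of_apply, Matrix.of_apply, ← iteratedDeriv_succ',
    ← iteratedDerivWithin_of_isOpen isOpen_Ioo ht,
    iteratedDerivWithin_pi_apply hγ.2.1 isOpen_Ioo.uniqueDiffOn ht (by omega)]

theorem HasTotallyPositiveTorsion.eq_zero_of_sum_mul_eq {d : ℕ} {a b : ℝ}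
    {γ : ℝ → Fin d → ℝ} (hγ : HasTotallyPositiveTorsion d a b γ) {c : Fin d → ℝ}
    {p : Fin (d + 1) → ℝ} (hp : StrictMono p) (hpab : ∀ j, p j ∈ Icc a b) {C : ℝ}
    (hc : ∀ j, ∑ l, c l * γ (p j) l = C) : c = 0 := by
  have hcoord : ∀ l, ContDiffOn ℝ d (fun x => γ x l) (Ioo a b) := contDiffOn_pi.1 hγ.2.1
  obtain ⟨y, hy, hyp, hyF⟩ := exists_strictMono_deriv_eq_zero ordConnected_Icc
    (continuousOn_finsetSum _ fun l _ => continuousOn_const.mul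
      ((continuous_apply l).comp_continuousOn hγ.1)) hp hpab hc
  have hyab : ∀ j, y j ∈ Ioo a b := fun j =>
    ⟨(hpab 0).1.trans_lt (hyp j).1, (hyp j).2.trans_le (hpab _).2⟩
  refine hγ.hasPosLeadingWronskians_deriv.eq_zero_of_sum_mul_eq_zero isOpen_Ioo
    ordConnected_Ioo (fun l => (hcoord l).deriv_of_isOpen isOpen_Ioo (by
      exact_mod_cast (show d - 1 + 1 ≤ d by have := l.pos; omega))) hy hyab fun j => ?_
  rw [← deriv_sum_mul fun l =>
    ((hcoord l).contDiffAt (isOpen_Ioo.mem_nhds (hyab j))).differentiableAt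
      (by exact_mod_cast j.pos.ne')]
  exact hyF j

theorem stmt1_general (m : ℕ) (a b : ℝ)
    (β : ℝ → Fin m → ℝ) (hβ : HasTotallyPositiveTorsion m a b β)
    (z : Fin m → ℝ) (hz : StrictMono z) (hzmem : ∀ i, z i ∈ Set.Icc a b)
    (r : ℝ) (hr : r ∈ Set.Icc a b) (hrz : ∀ i, r ≠ z i) :
    LinearIndependent ℝ (fun i : Fin m => β (z i) - β r) := by
  refine (Matrix.linearIndependent_rows_iff_mulVec_eq_zero
    (A := Matrix.of fun i l => β (z i) l - β r l)).2 fun c hc => ?_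
  have hz_eq : ∀ i, ∑ l, c l * β (z i) l = ∑ l, c l * β r l := fun i => by
    have h : ∑ l, (β (z i) l - β r l) * c l = 0 := congrFun hc i
    rw [← sub_eq_zero, ← h, ← Finset.sum_sub_distrib]
    exact Finset.sum_congr rfl fun l _ => by ring
  obtain ⟨p, hp, hpz⟩ := exists_strictMono_forall_mem_insert_range hz.injective
    (r := r) (by rintro ⟨i, rfl⟩; exact hrz i rfl)
  refine hβ.eq_zero_of_sum_mul_eq hp (C := ∑ l, c l * β r l) (fun j => ?_) fun j => ?_
  · obtain hj | ⟨i, hi⟩ := hpz j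
    · exact hj ▸ hr
    · exact hi ▸ hzmem i
  · obtain hj | ⟨i, hi⟩ := hpz j
    · rw [hj]
    · rw [← hi, hz_eq]

theorem stmt1 (m : ℕ) (hm : 1 ≤ m) (a b : ℝ) (hab : a < b)
    (β : ℝ → Fin m → ℝ) (hβ : HasTotallyPositiveTorsion m a b β)
    (z : Fin m → ℝ) (hz : StrictMono z) (hzmem : ∀ i, z i ∈ Set.Icc a b)
    (r : ℝ) (hr : r ∈ Set.Icc a b) (hrz : ∀ i, r ≠ z i) :
    LinearIndependent ℝ (fun i : Fin m => β (z i) - β r) :=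
  stmt1_general m a b β hβ z hz hzmem r hr hrz
end
end

section
/- Let γ : [−1,1] → ℝ³ be the smooth curve γ(t) = (t, t⁴, −t³), and set γ̄(t) = (t, t⁴). Then: (i) for every t ∈ [−1,1] the first leading principal minor of the matrix with columns γ′(t), γ″(t), γ‴(t) equals 1, while the 2×2 and 3×3 leading principal minors are positive for t ≠ 0 and vanish at t = 0; and (ii) there is no concave function B : conv(γ̄([−1,1])) → ℝ satisfying B(λ·γ̄(x) + (1−λ)·γ̄(1)) = −λx³ − (1−λ) for all λ ∈ [0,1] and x ∈ [−1,1]. In particular, the conclusion that the upper-hull parametrization defines a concave function fails when total positivity of the torsion is relaxed to allow minors to vanish at a single point. -/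
/-!
The minors of the matrix with columns `γ'`, `γ''`, `γ'''` are `1`, `12 t²` and `72 t²`. For (ii),
with `λ = 32/39` and `x = -1/2` the point `P = λ γ̄(x) + (1 - λ) γ̄(1) = (-3/13, 3/13)` also lies on
the chord from `γ̄(-1) = (-1, 1)` to `γ̄(0) = (0, 0)`. The prescribed value of `B` at `P` is `-1/13`,
whereas concavity along that chord forces `B P ≥ 3/13 · B(-1, 1) + 10/13 · B(0, 0) = 3/13`.
-/
open Set
open scoped ContDiff

theorem iteratedDeriv_apply_of_contDiff {𝕜 ι : Type*} [NontriviallyNormedField 𝕜] [Fintype ι]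
    {f : 𝕜 → ι → 𝕜} (hf : ContDiff 𝕜 ∞ f) (n : ℕ) (x : 𝕜) (i : ι) :
    iteratedDeriv n f x i = iteratedDeriv n (fun y => f y i) x := by
  induction n generalizing f with
  | zero => simp
  | succ n ih =>
    have hderiv : deriv f = fun y i => deriv (fun y => f y i) y := by
      funext y
      exact deriv_pi fun i => (contDiff_pi.1 hf i).differentiable (by simp) |>.differentiableAt
    rw [iteratedDeriv_succ', iteratedDeriv_succ', ih (contDiff_infty_iff_deriv.mp hf).2, hderiv]

lemma iteratedDeriv_quartic_curve (k : ℕ) (t : ℝ) :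
    iteratedDeriv k (fun t : ℝ => ![t, t ^ 4, -t ^ 3]) t =
      ![(1).descFactorial k * t ^ (1 - k), (4).descFactorial k * t ^ (4 - k),
        -((3).descFactorial k * t ^ (3 - k))] := by
  have hsmooth : ContDiff ℝ ∞ (fun t : ℝ => ![t, t ^ 4, -t ^ 3]) := by
    refine contDiff_pi.2 fun i => ?_
    fin_cases i <;>
      simp only [Fin.zero_eta, Fin.mk_one, Fin.reduceFinMk, Matrix.cons_val] <;> fun_prop
  funext i
  rw [iteratedDeriv_apply_of_contDiff hsmooth]
  fin_cases i
  · simpa using iteratedDeriv_pow (x := t) 1 k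
  · simp
  · simp

lemma det_torsion_minor_one (t : ℝ) :
    (Matrix.of (fun i j : Fin 1 => iteratedDeriv (j.1 + 1)
      (fun t : ℝ => ![t, t ^ 4, -t ^ 3]) t (Fin.castLE (by omega) i))).det = 1 := by
  simp [iteratedDeriv_quartic_curve]

lemma det_torsion_minor_two (t : ℝ) :
    (Matrix.of (fun i j : Fin 2 => iteratedDeriv (j.1 + 1)
      (fun t : ℝ => ![t, t ^ 4, -t ^ 3]) t (Fin.castLE (by omega) i))).det = 12 * t ^ 2 := by
  norm_num [Matrix.det_fin_two, iteratedDeriv_quartic_curve, Fin.castLE, Nat.descFactorial]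

lemma det_torsion_minor_three (t : ℝ) :
    (Matrix.of (fun i j : Fin 3 => iteratedDeriv (j.1 + 1)
      (fun t : ℝ => ![t, t ^ 4, -t ^ 3]) t i)).det = 72 * t ^ 2 := by
  simp [Matrix.det_fin_three, iteratedDeriv_quartic_curve, Nat.descFactorial]
  ring

theorem not_exists_concaveOn_chord_extension :
    ¬∃ B : (Fin 2 → ℝ) → ℝ,
      ConcaveOn ℝ (convexHull ℝ ((fun t : ℝ => ![t, t ^ 4]) '' Icc (-1 : ℝ) 1)) B ∧
      ∀ l ∈ Icc (0 : ℝ) 1, ∀ x ∈ Icc (-1 : ℝ) 1,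
        B (l • ![x, x ^ 4] + (1 - l) • ![(1 : ℝ), 1]) = -l * x ^ 3 - (1 - l) := by
  rintro ⟨B, hB, hval⟩
  have hmem : ∀ t ∈ Icc (-1 : ℝ) 1,
      ![t, t ^ 4] ∈ convexHull ℝ ((fun t : ℝ => ![t, t ^ 4]) '' Icc (-1 : ℝ) 1) :=
    fun t ht => subset_convexHull ℝ _ ⟨t, ht, rfl⟩
  have hA : B ![-1, 1] = 1 := by
    convert hval 1 (by norm_num) (-1) (by norm_num) using 2 <;> norm_num
  have hO : B ![0, 0] = 0 := by
    convert hval 1 (by norm_num) 0 (by norm_num) using 2 <;> norm_num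
  have hP : B ![-(3 / 13), 3 / 13] = -(1 / 13) := by
    convert hval (32 / 39) (by norm_num) (-1 / 2) (by norm_num) using 2 <;> norm_num
  have hconc := hB.2 (hmem (-1) (by norm_num)) (hmem 0 (by norm_num))
    (by norm_num : (0 : ℝ) ≤ 3 / 13) (by norm_num : (0 : ℝ) ≤ 10 / 13) (by norm_num)
  norm_num [hA, hO, hP] at hconc

theorem stmt11 (γ : ℝ → Fin 3 → ℝ) (hγ : ∀ t, γ t = ![t, t ^ 4, -t ^ 3]) :
    ((∀ t ∈ Set.Icc (-1 : ℝ) 1,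
        (Matrix.of (fun i j : Fin 1 =>
          iteratedDeriv (j.1 + 1) γ t (Fin.castLE (by omega) i))).det = 1) ∧
      (∀ t ∈ Set.Icc (-1 : ℝ) 1, t ≠ 0 →
        0 < (Matrix.of (fun i j : Fin 2 =>
          iteratedDeriv (j.1 + 1) γ t (Fin.castLE (by omega) i))).det ∧
        0 < (Matrix.of (fun i j : Fin 3 => iteratedDeriv (j.1 + 1) γ t i)).det) ∧
      ((Matrix.of (fun i j : Fin 2 =>
          iteratedDeriv (j.1 + 1) γ 0 (Fin.castLE (by omega) i))).det = 0 ∧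
        (Matrix.of (fun i j : Fin 3 => iteratedDeriv (j.1 + 1) γ 0 i)).det = 0)) ∧
    ¬∃ B : (Fin 2 → ℝ) → ℝ,
        ConcaveOn ℝ (convexHull ℝ ((fun t : ℝ => ![t, t ^ 4]) '' Set.Icc (-1 : ℝ) 1)) B ∧
        ∀ l ∈ Set.Icc (0 : ℝ) 1, ∀ x ∈ Set.Icc (-1 : ℝ) 1,
          B (l • ![x, x ^ 4] + (1 - l) • ![(1 : ℝ), 1]) = -l * x ^ 3 - (1 - l) := by
  obtain rfl : γ = fun t => ![t, t ^ 4, -t ^ 3] := funext hγ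
  refine ⟨⟨fun t _ => det_torsion_minor_one t, fun t _ ht => ?_, ?_⟩,
    not_exists_concaveOn_chord_extension⟩
  · rw [det_torsion_minor_two, det_torsion_minor_three]
    exact ⟨by positivity, by positivity⟩
  · rw [det_torsion_minor_two, det_torsion_minor_three]
    norm_num
end

section
/- Let m ≥ 1, let Δ be an invertible m×m real matrix, let p, w, u, q ∈ ℝ^m, and let a, b, c, d ∈ ℝ. Then det M(q,w,a) · det M(u,p,b) − det M(u,w,c) · det M(q,p,d) = det N · det Δ, where for column vectors v and row vectors r, M(v,r,s) denotes the (m+1)×(m+1) block matrix with top-left block Δ, last column v ∈ ℝ^m on top of the scalar s, and last row r followed by s (i.e., M(v,r,s) = [Δ, v; r, s]), and N is the (m+2)×(m+2) block matrix [Δ, u, q; p, b, d; w, c, a] whose top-left block is Δ, whose last two columns are u, q extended by the rows (b, d) and (c, a), and whose last two rows are p and w extended accordingly. -/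
noncomputable section

open Matrix

/-- The `(m+1) × (m+1)` block matrix `[Δ, v; r, s]` with top-left block `Δ`,
last column `v` over the scalar `s`, and last row `r` followed by `s`. -/
def blockM (m : ℕ) (Δ : Matrix (Fin m) (Fin m) ℝ) (v r : Fin m → ℝ) (s : ℝ) :
    Matrix (Fin m ⊕ Unit) (Fin m ⊕ Unit) ℝ :=
  Matrix.fromBlocks Δ (Matrix.of fun i (_ : Unit) => v i)
    (Matrix.of fun (_ : Unit) j => r j) (Matrix.of fun _ _ => s)

/-- The `(m+2) × (m+2)` block matrix `[Δ, u, q; p, b, d; w, c, a]`. -/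
def blockN (m : ℕ) (Δ : Matrix (Fin m) (Fin m) ℝ) (u q p w : Fin m → ℝ)
    (a b c d : ℝ) : Matrix (Fin m ⊕ Fin 2) (Fin m ⊕ Fin 2) ℝ :=
  Matrix.fromBlocks Δ (Matrix.of fun i (j : Fin 2) => ![u i, q i] j)
    (Matrix.of fun (i : Fin 2) j => ![p, w] i j) !![b, d; c, a]

theorem stmt19 (m : ℕ) (hm : 1 ≤ m) (Δ : Matrix (Fin m) (Fin m) ℝ)
    (hΔ : IsUnit Δ.det) (p w u q : Fin m → ℝ) (a b c d : ℝ) :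
    (blockM m Δ q w a).det * (blockM m Δ u p b).det -
      (blockM m Δ u w c).det * (blockM m Δ q p d).det =
    (blockN m Δ u q p w a b c d).det * Δ.det := by
  have : Invertible Δ := Δ.invertibleOfIsUnitDet hΔ
  rw [blockM, blockM, blockM, blockM, blockN, Matrix.det_fromBlocks₁₁,
    Matrix.det_fromBlocks₁₁, Matrix.det_fromBlocks₁₁, Matrix.det_fromBlocks₁₁,
    Matrix.det_fromBlocks₁₁]
  simp only [Matrix.det_unique, Matrix.det_fin_two, Matrix.sub_apply, Matrix.mul_apply,
    Matrix.of_apply, Matrix.cons_val', Matrix.cons_val_zero, Matrix.cons_val_one,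
    Matrix.head_cons, Matrix.empty_val', Matrix.cons_val_fin_one, Matrix.head_fin_const,
    Matrix.invOf_eq_nonsing_inv]
  ring

end
end
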